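/- arXiv:2406.09109 — 15 statements merged into one kernel-verified Lean document; each statement's English description precedes it below -/
import Mathlib

section
/- Let S be a regular *-semigroup and let P be its set of projections. Then for all p, q ∈ P the product pq is an idempotent of S (i.e. (pq)(pq) = pq) and pqp is again a projection; moreover, defining unary operations on P by qθ_p := pqp, the set P becomes a projection algebra, i.e. for all p, q, r ∈ P: (P1) pθ_p = p; (P2) qθ_pθ_p = qθ_p; (P3) pθ_qθ_p = qθ_p; (P4) rθ_pθ_qθ_p = rθ_{qθ_p}; (P5) rθ_pθ_qθ_pθ_q = rθ_pθ_q (operations written on the right and composed left to right). -/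
private theorem key {S : Type*} [Semigroup S] [StarMul S]
    (hreg : ∀ a : S, a * star a * a = a) (p q : S)
    (hp : p * p = p) (hp' : star p = p) (hq : q * q = q) (hq' : star q = q) :
    (p * q) * (p * q) = p * q := by
  have h := hreg (p * q)
  rw [star_mul, hq', hp'] at h
  calc (p * q) * (p * q) = p * (q * q) * (p * p) * q := by
        rw [hq, hp]; simp [mul_assoc]
    _ = p * q * (q * p) * (p * q) := by simp [mul_assoc]
    _ = p * q := h

/-- In a regular *-semigroup `S` (a semigroup with an involution `star`
satisfying `star (star a) = a`, `star (a*b) = star b * star a`, and `a * star a * a = a`),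
for projections `p, q` (elements with `p*p = p = star p`): `pq` is idempotent, `pqp` is
again a projection, and the operations `qθ_p := pqp` make the set of projections a
projection algebra, i.e. satisfy (P1)–(P5). -/
theorem stmt0 {S : Type*} [Semigroup S] [StarMul S]
    (hreg : ∀ a : S, a * star a * a = a) :
    -- `pq` is an idempotent
    (∀ p q : S, p * p = p → star p = p → q * q = q → star q = q →
      (p * q) * (p * q) = p * q) ∧
    -- `pqp` is again a projection
    (∀ p q : S, p * p = p → star p = p → q * q = q → star q = q →
      (p * q * p) * (p * q * p) = p * q * p ∧ star (p * q * p) = p * q * p) ∧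
    -- (P1) `pθ_p = p`
    (∀ p : S, p * p = p → star p = p → p * p * p = p) ∧
    -- (P2) `qθ_pθ_p = qθ_p`
    (∀ p q : S, p * p = p → star p = p → q * q = q → star q = q →
      p * (p * q * p) * p = p * q * p) ∧
    -- (P3) `pθ_qθ_p = qθ_p`
    (∀ p q : S, p * p = p → star p = p → q * q = q → star q = q →
      p * (q * p * q) * p = p * q * p) ∧
    -- (P4) `rθ_pθ_qθ_p = rθ_{qθ_p}`
    (∀ p q r : S, p * p = p → star p = p → q * q = q → star q = q →
      r * r = r → star r = r →
      p * (q * (p * r * p) * q) * p = (p * q * p) * r * (p * q * p)) ∧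
    -- (P5) `rθ_pθ_qθ_pθ_q = rθ_pθ_q`
    (∀ p q r : S, p * p = p → star p = p → q * q = q → star q = q →
      r * r = r → star r = r →
      q * (p * (q * (p * r * p) * q) * p) * q = q * (p * r * p) * q) := by

  refine ⟨fun p q hp hp' hq hq' => key hreg p q hp hp' hq hq', ?_, ?_, ?_, ?_, ?_, ?_⟩
  · intro p q hp hp' hq hq'
    have k := key hreg p q hp hp' hq hq'
    constructor
    · calc (p * q * p) * (p * q * p) = p * q * (p * p) * q * p := by simp [mul_assoc]
        _ = (p * q) * (p * q) * p := by rw [hp]; simp [mul_assoc]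
        _ = p * q * p := by rw [k]
    · simp [star_mul, hp', hq', mul_assoc]
  · intro p hp hp'; rw [hp, hp]
  · intro p q hp hp' hq hq'
    calc p * (p * q * p) * p = (p * p) * q * (p * p) := by simp [mul_assoc]
      _ = p * q * p := by rw [hp]
  · intro p q hp hp' hq hq'
    have k := key hreg p q hp hp' hq hq'
    calc p * (q * p * q) * p = (p * q) * (p * q) * p := by simp [mul_assoc]
      _ = p * q * p := by rw [k]
  · intro p q r hp hp' hq hq' hr hr'
    simp [mul_assoc]
  · intro p q r hp hp' hq hq' hr hr'
    have k1 := key hreg p q hp hp' hq hq'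
    have k2 := key hreg q p hq hq' hp hp'
    calc q * (p * (q * (p * r * p) * q) * p) * q
        = ((q * p) * (q * p)) * r * ((p * q) * (p * q)) := by simp [mul_assoc]
      _ = (q * p) * r * (p * q) := by rw [k1, k2]
      _ = q * (p * r * p) * q := by simp [mul_assoc]
end

section
/- Let P be a projection algebra. Then for any q, r ∈ P and any finite list p₁, …, p_k of elements of P: (i) the unary operation θ_{qθ_{p₁}⋯θ_{p_k}} equals the composite θ_{p_k}⋯θ_{p₁}θ_qθ_{p₁}⋯θ_{p_k} (as functions P → P, operations written on the right and composed left to right); and (ii) r θ_{p_k}⋯θ_{p₁}θ_qθ_{p₁}⋯θ_{p_k}θ_r = q θ_{p₁}⋯θ_{p_k}θ_r. -/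
structure ProjectionAlgebra (P : Type*) where
  th : P → P → P
  P1 : ∀ p, th p p = p
  P2 : ∀ p q, th p (th p q) = th p q
  P3 : ∀ p q, th p (th q p) = th p q
  P4 : ∀ p q r, th p (th q (th p r)) = th (th p q) r
  P5 : ∀ p q r, th q (th p (th q (th p r))) = th q (th p r)

namespace ProjectionAlgebra

variable {P : Type*} (A : ProjectionAlgebra P)

/-- `p ≤ q` iff `p = pθ_q`. -/
def le (p q : P) : Prop := p = A.th q p

/-- `p ≤F q` iff `p = qθ_p`. -/
def leF (p q : P) : Prop := p = A.th p q

/-- `p F q` iff `p ≤F q` and `q ≤F p`. -/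
def Frel (p q : P) : Prop := A.leF p q ∧ A.leF q p

/-- `(e, f)` is a `p`-linked pair: `f = eθ_pθ_f` and `e = fθ_pθ_e`. -/
def Linked (p e f : P) : Prop :=
  f = A.th f (A.th p e) ∧ e = A.th e (A.th p f)

/-- `q θ_{p₁} ⋯ θ_{p_k}` for the list `ps = [p₁, …, p_k]`. -/
def applyList (q : P) (ps : List P) : P := ps.foldl (fun x p => A.th p x) q

end ProjectionAlgebra

/-- In a projection algebra `P`, for any `q, r ∈ P` and any list
`ps = [p₁, …, p_k]`:
(i) `θ_{qθ_{p₁}⋯θ_{p_k}} = θ_{p_k}⋯θ_{p₁}θ_qθ_{p₁}⋯θ_{p_k}` as functions `P → P`, and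
(ii) `r θ_{p_k}⋯θ_{p₁}θ_qθ_{p₁}⋯θ_{p_k}θ_r = q θ_{p₁}⋯θ_{p_k}θ_r`. -/
theorem stmt1 {P : Type*} (A : ProjectionAlgebra P) (q r : P) (ps : List P) :
    (∀ s : P, A.th (A.applyList q ps) s
        = A.applyList (A.th q (A.applyList s ps.reverse)) ps) ∧
    A.th r (A.applyList (A.th q (A.applyList r ps.reverse)) ps)
      = A.th r (A.applyList q ps) := by
  have key : ∀ (ps : List P) (q s : P), A.th (A.applyList q ps) s
      = A.applyList (A.th q (A.applyList s ps.reverse)) ps := by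
    intro ps
    induction ps with
    | nil => intro q s; simp [ProjectionAlgebra.applyList]
    | cons p ps ih =>
      intro q s
      have h1 : A.applyList q (p :: ps) = A.applyList (A.th p q) ps := rfl
      have h2 : A.applyList s (p :: ps).reverse
          = A.th p (A.applyList s ps.reverse) := by
        simp [ProjectionAlgebra.applyList]
      rw [h1, ih, h2]
      show _ = A.applyList (A.th p (A.th q (A.th p (A.applyList s ps.reverse)))) ps
      rw [A.P4]
  refine ⟨key ps q, ?_⟩
  rw [← key ps q r, A.P3]
end

section
/- Let P be a projection algebra, p ∈ P, and suppose (e, f) is a p-linked pair. Then: (1) (f, e) is also a p-linked pair; (2) e ≤F p and f ≤F p (i.e. e = pθ_e and f = pθ_f); (3) each of e and f is F-related to each of eθ_p and fθ_p (i.e. e F eθ_p, e F fθ_p, f F eθ_p and f F fθ_p). -/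
/-- If `(e, f)` is a `p`-linked pair in a projection algebra `P`, then
(1) `(f, e)` is also `p`-linked;
(2) `e ≤F p` and `f ≤F p`;
(3) each of `e` and `f` is `F`-related to each of `eθ_p` and `fθ_p`. -/
theorem stmt2 {P : Type*} (A : ProjectionAlgebra P) (p e f : P)
    (h : A.Linked p e f) :
    A.Linked p f e ∧
    (A.leF e p ∧ A.leF f p) ∧
    (A.Frel e (A.th p e) ∧ A.Frel e (A.th p f) ∧
     A.Frel f (A.th p e) ∧ A.Frel f (A.th p f)) := by
  obtain ⟨h1, h2⟩ := h
  have aux : ∀ x y : P, x = A.th x (A.th p y) → A.th x p = x := by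
    intro x y hx
    calc A.th x p = A.th (A.th x (A.th p y)) p := by rw [← hx]
      _ = A.th x (A.th (A.th p y) (A.th x p)) := (A.P4 x (A.th p y) p).symm
      _ = A.th x (A.th p (A.th y (A.th p (A.th x p)))) := by rw [← A.P4]
      _ = A.th x (A.th p (A.th y (A.th p x))) := by rw [A.P3 p x]
      _ = A.th x (A.th (A.th p y) x) := by rw [A.P4]
      _ = A.th x (A.th p y) := A.P3 x (A.th p y)
      _ = x := hx.symm
  have he : A.th e p = e := aux e f h2
  have hf : A.th f p = f := aux f e h1
  refine ⟨⟨h2, h1⟩, ⟨he.symm, hf.symm⟩, ?_, ?_, ?_, ?_⟩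
  · constructor
    · show e = A.th e (A.th p e)
      rw [A.P3 e p, he]
    · show A.th p e = A.th (A.th p e) e
      rw [← A.P4, A.P3 e p, he]
  · exact ⟨h2, by show A.th p f = A.th (A.th p f) e; rw [← A.P4, ← h1]⟩
  · exact ⟨h1, by show A.th p e = A.th (A.th p e) f; rw [← A.P4, ← h2]⟩
  · constructor
    · show f = A.th f (A.th p f)
      rw [A.P3 f p, hf]
    · show A.th p f = A.th (A.th p f) f
      rw [← A.P4, A.P3 f p, hf]
end

section
/- Let P be a projection algebra, p ∈ P, and suppose (e, f) is a p-linked pair. If e' ≤ e (i.e. e' = e'θ_e) and f' := e'θ_pθ_f, then (e', f') is a p-linked pair; moreover e'θ_{eθ_p} = e'θ_p and e'θ_{eθ_p}θ_f = f'. -/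
/-- If `(e, f)` is `p`-linked and `e' ≤ e`, then with `f' := e'θ_pθ_f` the
pair `(e', f')` is `p`-linked; moreover `e'θ_{eθ_p} = e'θ_p` and `e'θ_{eθ_p}θ_f = f'`. -/
theorem stmt3 {P : Type*} (A : ProjectionAlgebra P) (p e f e' : P)
    (h : A.Linked p e f) (he' : A.le e' e) :
    A.Linked p e' (A.th f (A.th p e')) ∧
    A.th (A.th p e) e' = A.th p e' ∧
    A.th f (A.th (A.th p e) e') = A.th f (A.th p e') := by
  obtain ⟨hf, he⟩ := h
  have he' : e' = A.th e e' := he'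
  -- eθ_{e'} = e'
  have L2 : A.th e' e = e' := by
    have := A.P3 e' e
    rw [← he', A.P1] at this
    exact this.symm
  -- θ_{e'} expansion: th e' x = th e (th e' (th e x))
  have exp : ∀ x, A.th e' x = A.th e (A.th e' (A.th e x)) := by
    intro x
    conv_lhs => rw [he']
    rw [← A.P4]
  -- fθ_pθ_{e'} = e'
  have key : A.th e' (A.th p f) = e' := by
    rw [exp, ← he, L2, ← he']
  -- fθ_{e'θ_p} = e'θ_p
  have afix : A.th (A.th p e') f = A.th p e' := by
    rw [← A.P4, key]
  -- claim (a): e'θ_{eθ_p} = e'θ_p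
  have L1 : A.th (A.th p e) e' = A.th p e' := by
    conv_lhs => rw [he']
    rw [← A.P4, A.P5, ← he']
  -- goal2 helper: f'θ_pθ_e = e'
  have stepA : A.th e (A.th p (A.th f (A.th p e'))) = e' := by
    conv_lhs => rw [he', A.P4, A.P4, ← he, ← he']
  refine ⟨⟨?_, ?_⟩, L1, by rw [L1]⟩
  · -- f' = f'θ_{e'θ_p}
    symm
    rw [← A.P4, A.P3, afix]
  · -- e' = f'θ_pθ_{e'}
    rw [exp, stepA, A.P1, ← he']
end

section
/- Let P be a projection algebra, let p₁, …, p_k ∈ P with p₁ F p₂ F ⋯ F p_k, and let e, f ∈ P satisfy f = eθ_{p₁}⋯θ_{p_k}θ_f and e = fθ_{p_k}⋯θ_{p₁}θ_e. Define u₀ = e, u_i = eθ_{p₁}⋯θ_{p_i} for 1 ≤ i ≤ k, v_i = fθ_{p_k}⋯θ_{p_i} for 1 ≤ i ≤ k, and v_{k+1} = f. Then for each 1 ≤ i ≤ k, the pair (u_{i-1}, v_{i+1}) is p_i-linked. -/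
namespace ProjectionAlgebra

variable {P : Type*} (A : ProjectionAlgebra P)

lemma key_lemma (q e f : P) (h : f = A.th f (A.th q e)) :
    A.th q f = A.th (A.th q f) e := by
  rw [← A.P4, ← h]

lemma applyList_take_succ (e : P) (ps : List P) (m : ℕ) (hm : m < ps.length) :
    A.applyList e (ps.take (m + 1)) = A.th ps[m] (A.applyList e (ps.take m)) := by
  have h : ps.take (m + 1) = ps.take m ++ [ps[m]] := by
    rw [List.take_succ, List.getElem?_eq_getElem hm]; rfl
  rw [h]
  simp only [applyList, List.foldl_append, List.foldl_cons, List.foldl_nil]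

lemma applyList_drop_rev (f : P) (ps : List P) (m : ℕ) (hm : m < ps.length) :
    A.applyList f ((ps.drop m).reverse)
      = A.th ps[m] (A.applyList f ((ps.drop (m + 1)).reverse)) := by
  rw [List.drop_eq_getElem_cons hm]
  simp only [applyList, List.reverse_cons, List.foldl_append, List.foldl_cons,
    List.foldl_nil]

end ProjectionAlgebra

/-- Let `ps = [p₁, …, p_k]` be a list of projections with
`p₁ F p₂ F ⋯ F p_k`, and let `e, f` satisfy `f = eθ_{p₁}⋯θ_{p_k}θ_f` and
`e = fθ_{p_k}⋯θ_{p₁}θ_e`.  With `u₀ = e`, `u_i = eθ_{p₁}⋯θ_{p_i}`,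
`v_i = fθ_{p_k}⋯θ_{p_i}`, `v_{k+1} = f`, the pair `(u_{i-1}, v_{i+1})` is `p_i`-linked
for each `1 ≤ i ≤ k`.  (Here `j : Fin ps.length` is the 0-based index `j = i - 1`,
`u_{i-1} = applyList e (ps.take j)` and `v_{i+1} = applyList f (ps.drop (j+1)).reverse`.) -/
theorem stmt4 {P : Type*} (A : ProjectionAlgebra P) (e f : P) (ps : List P)
    (hchain : ps.Chain' A.Frel)
    (hf : f = A.th f (A.applyList e ps))
    (he : e = A.th e (A.applyList f ps.reverse)) :
    ∀ j : Fin ps.length,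
      A.Linked (ps.get j)
        (A.applyList e (ps.take (j : ℕ)))
        (A.applyList f ((ps.drop ((j : ℕ) + 1)).reverse)) := by

  have claimA : ∀ d m, m + d = ps.length →
      A.applyList f ((ps.drop m).reverse)
        = A.th (A.applyList f ((ps.drop m).reverse)) (A.applyList e (ps.take m)) := by
    intro d
    induction d with
    | zero =>
      intro m hm
      have : m = ps.length := by omega
      subst this
      simpa [ProjectionAlgebra.applyList] using hf
    | succ d ih =>
      intro m hm
      have hmk : m < ps.length := by omega
      have h1 := ih (m + 1) (by omega)
      rw [A.applyList_take_succ e ps m hmk] at h1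
      rw [A.applyList_drop_rev f ps m hmk]
      exact A.key_lemma _ _ _ h1
  have claimB : ∀ m, m ≤ ps.length →
      A.applyList e (ps.take m)
        = A.th (A.applyList e (ps.take m)) (A.applyList f ((ps.drop m).reverse)) := by
    intro m
    induction m with
    | zero =>
      intro _
      simpa [ProjectionAlgebra.applyList] using he
    | succ m ih =>
      intro hm
      have hmk : m < ps.length := by omega
      have h1 := ih (by omega)
      rw [A.applyList_drop_rev f ps m hmk] at h1
      rw [A.applyList_take_succ e ps m hmk]
      exact A.key_lemma _ _ _ h1
  intro j
  have hj : (j : ℕ) < ps.length := j.isLt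
  constructor
  · have := claimA (ps.length - ((j : ℕ) + 1)) ((j : ℕ) + 1) (by omega)
    rw [A.applyList_take_succ e ps (j : ℕ) hj] at this
    simpa [List.get_eq_getElem] using this
  · have := claimB (j : ℕ) (by omega)
    rw [A.applyList_drop_rev f ps (j : ℕ) hj] at this
    simpa [List.get_eq_getElem] using this
end

section
/- Let S be a regular *-semigroup with projection set P, and let (p, q) and (r, s) be friendly pairs of projections (p = pqp, q = qpq, r = rsr, s = srs), giving idempotents e = pq and f = rs of S. Then: (1) e = ef if and only if q ≤ s, i.e. q = sqs; and (2) e = fe if and only if p ≤ r, i.e. p = rpr. -/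
/-- Let `S` be a regular *-semigroup, and let `(p, q)` and `(r, s)` be
friendly pairs of projections, giving idempotents `e = pq` and `f = rs`.  Then
(1) `e = ef ↔ q ≤ s` (i.e. `q = sqs`), and (2) `e = fe ↔ p ≤ r` (i.e. `p = rpr`). -/
theorem stmt6 {S : Type*} [Semigroup S] [StarMul S]
    (hreg : ∀ a : S, a * star a * a = a)
    (p q r s : S)
    (hp : p * p = p ∧ star p = p) (hq : q * q = q ∧ star q = q)
    (hr : r * r = r ∧ star r = r) (hs : s * s = s ∧ star s = s)
    (hpq1 : p = p * q * p) (hpq2 : q = q * p * q)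
    (hrs1 : r = r * s * r) (hrs2 : s = s * r * s) :
    (p * q = (p * q) * (r * s) ↔ q = s * q * s) ∧
    (p * q = (r * s) * (p * q) ↔ p = r * p * r) := by
  obtain ⟨hp2, hps⟩ := hp
  obtain ⟨hq2, hqs⟩ := hq
  obtain ⟨hr2, hrs⟩ := hr
  obtain ⟨hs2, hss⟩ := hs
  constructor
  · constructor
    · intro h
      have q1 : q = q * (r * s) := by
        calc q = q * p * q := hpq2
        _ = q * (p * q) := by rw [mul_assoc]
        _ = q * (p * q * (r * s)) := by rw [← h]
        _ = q * p * q * (r * s) := by simp only [mul_assoc]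
        _ = q * (r * s) := by rw [← hpq2]
      have q2 : q = s * (r * q) := by
        have := congrArg star q1
        rw [hqs, star_mul, star_mul, hqs, hrs, hss, mul_assoc] at this
        exact this
      have qs : q * s = q := by
        calc q * s = q * (r * s) * s := by rw [← q1]
        _ = q * (r * (s * s)) := by rw [mul_assoc, mul_assoc]
        _ = q * (r * s) := by rw [hs2]
        _ = q := q1.symm
      have sq : s * q = q := by
        calc s * q = s * (s * (r * q)) := by rw [← q2]
        _ = s * s * (r * q) := by rw [mul_assoc]
        _ = s * (r * q) := by rw [hs2]
        _ = q := q2.symm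
      rw [sq, qs]
    · intro h
      have qs : q * s = q := by
        calc q * s = s * q * s * s := by rw [← h]
        _ = s * q * (s * s) := by rw [mul_assoc]
        _ = s * q * s := by rw [hs2]
        _ = q := h.symm
      have key : q * (r * s) = q := by
        calc q * (r * s) = q * s * (r * s) := by rw [qs]
        _ = q * (s * r * s) := by rw [mul_assoc, mul_assoc]
        _ = q * s := by rw [← hrs2]
        _ = q := qs
      calc p * q = p * (q * (r * s)) := by rw [key]
      _ = p * q * (r * s) := by rw [mul_assoc]
  · constructor
    · intro h
      have p1 : p = r * s * p := by
        calc p = p * q * p := hpq1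
        _ = r * s * (p * q) * p := by rw [← h]
        _ = r * s * (p * q * p) := by rw [mul_assoc]
        _ = r * s * p := by rw [← hpq1]
      have p2 : p = p * (s * r) := by
        have := congrArg star p1
        rw [hps, star_mul, star_mul, hps, hrs, hss, ← mul_assoc] at this
        exact this.trans (mul_assoc p s r)
      have rp : r * p = p := by
        calc r * p = r * (r * s * p) := by rw [← p1]
        _ = r * (r * (s * p)) := by rw [mul_assoc]
        _ = r * r * (s * p) := by rw [mul_assoc]
        _ = r * (s * p) := by rw [hr2]
        _ = r * s * p := by rw [mul_assoc]
        _ = p := p1.symm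
      have pr : p * r = p := by
        calc p * r = p * (s * r) * r := by rw [← p2]
        _ = p * (s * (r * r)) := by rw [mul_assoc, mul_assoc]
        _ = p * (s * r) := by rw [hr2]
        _ = p := p2.symm
      rw [rp, pr]
    · intro h
      have rp : r * p = p := by
        calc r * p = r * (r * p * r) := by rw [← h]
        _ = r * (r * (p * r)) := by rw [mul_assoc]
        _ = r * r * (p * r) := by rw [mul_assoc]
        _ = r * (p * r) := by rw [hr2]
        _ = r * p * r := by rw [mul_assoc]
        _ = p := h.symm
      have key : r * s * p = p := by
        calc r * s * p = r * s * (r * p) := by rw [rp]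
        _ = r * s * r * p := by simp only [mul_assoc]
        _ = r * p := by rw [← hrs1]
        _ = p := rp
      calc p * q = r * s * p * q := by rw [key]
      _ = r * s * (p * q) := by rw [mul_assoc]
end

section
/- Let S and S' be regular *-semigroups with projection sets P and P' respectively, and suppose ψ : P → P' is a bijection satisfying ψ(pqp) = ψ(p)ψ(q)ψ(p) for all p, q ∈ P (an isomorphism of projection algebras). Then the map Φ from the set of idempotents of S to the set of idempotents of S' defined by Φ(e) = ψ(ee*)ψ(e*e) is a bijection such that: (i) Φ(e*) = Φ(e)* for every idempotent e; (ii) for all idempotents e, f of S, the pair (e, f) is a basic pair (i.e. ef ∈ {e, f} or fe ∈ {e, f}) if and only if (Φ(e), Φ(f)) is a basic pair of S'; and (iii) for every basic pair (e, f) of S, Φ(ef) = Φ(e)Φ(f). In particular, the projection algebra of a regular *-semigroup uniquely determines its biordered set of idempotents up to isomorphism. -/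
section Aux
variable {T : Type*} [Semigroup T] [StarMul T]

lemma mA (hreg : ∀ a : T, a * star a * a = a) (a : T) : a * (star a * a) = a := by
  rw [← mul_assoc]; exact hreg a

lemma mA' (hreg : ∀ a : T, a * star a * a = a) (a : T) : star a * (a * star a) = star a := by
  have := mA hreg (star a); rwa [star_star] at this

lemma mAx (hreg : ∀ a : T, a * star a * a = a) (a x : T) :
    a * (star a * (a * x)) = a * x := by
  rw [← mul_assoc, ← mul_assoc, hreg]

lemma mA'x (hreg : ∀ a : T, a * star a * a = a) (a x : T) :
    star a * (a * (star a * x)) = star a * x := by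
  have := mAx hreg (star a) x; rwa [star_star] at this

lemma idemx {u : T} (hu : u * u = u) (x : T) : u * (u * x) = u * x := by
  rw [← mul_assoc, hu]

lemma idem_star {u : T} (hu : u * u = u) : star u * star u = star u := by
  rw [← star_mul, hu]

lemma tri {a b : T} (h : a * b * a = a) (x : T) : a * (b * (a * x)) = a * x := by
  rw [← mul_assoc, ← mul_assoc, h]

lemma tri0 {a b : T} (h : a * b * a = a) : a * (b * a) = a := by
  rw [← mul_assoc, h]

lemma proj_mul_star (hreg : ∀ a : T, a * star a * a = a) (a : T) :
    (a * star a) * (a * star a) = a * star a ∧ star (a * star a) = a * star a := by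
  constructor
  · rw [← mul_assoc, hreg]
  · rw [star_mul, star_star]

lemma proj_star_mul (hreg : ∀ a : T, a * star a * a = a) (a : T) :
    (star a * a) * (star a * a) = star a * a ∧ star (star a * a) = star a * a := by
  have := proj_mul_star hreg (star a); rwa [star_star] at this

lemma proj_conj (hreg : ∀ a : T, a * star a * a = a) {p q : T}
    (hp2 : p * p = p) (hps : star p = p) (hq2 : q * q = q) (hqs : star q = q) :
    (p * q * p) * (p * q * p) = p * q * p ∧ star (p * q * p) = p * q * p := by
  have key : star (q * p) * (q * p) = p * q * p := by
    simp only [star_mul, hps, hqs, mul_assoc, idemx hq2]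
  constructor
  · rw [← key]; exact (proj_star_mul hreg (q * p)).1
  · rw [← key]; exact (proj_star_mul hreg (q * p)).2

lemma pq_idem {p q : T}
    (hp2 : p * p = p) (hps : star p = p) (hq2 : q * q = q) (hqs : star q = q)
    (h1 : p * q * p = p) (h2 : q * p * q = q) :
    (p * q) * (p * q) = p * q ∧ (p * q) * star (p * q) = p ∧ star (p * q) * (p * q) = q := by
  refine ⟨?_, ?_, ?_⟩ <;>
    simp only [star_mul, hps, hqs, mul_assoc, idemx hp2, idemx hq2, tri0 h1, tri h1,
      tri0 h2, tri h2]

lemma idem_decomp (hreg : ∀ a : T, a * star a * a = a) {e : T} (he : e * e = e) :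
    (e * star e) * (star e * e) = e ∧
    (e * star e) * (star e * e) * (e * star e) = e * star e ∧
    (star e * e) * (e * star e) * (star e * e) = star e * e := by
  refine ⟨?_, ?_, ?_⟩ <;>
    simp only [mul_assoc, he, idemx he, idem_star he, idemx (idem_star he),
      mA hreg, mAx hreg, mA' hreg, mA'x hreg]

lemma prod_forms (hreg : ∀ a : T, a * star a * a = a) {e f : T}
    (he : e * e = e) (hf : f * f = f) :
    (e * f) * star (e * f)
      = (e * star e) * ((star e * e) * (f * star f) * (star e * e)) * (e * star e) ∧
    star (e * f) * (e * f)
      = (star f * f) * ((f * star f) * (star e * e) * (f * star f)) * (star f * f) := by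
  constructor <;>
    simp only [star_mul, star_star, mul_assoc, he, hf, idem_star he, idem_star hf,
      idemx he, idemx hf, idemx (idem_star he), idemx (idem_star hf),
      mA hreg, mAx hreg, mA' hreg, mA'x hreg]

lemma basicL (hreg : ∀ a : T, a * star a * a = a) {e f : T}
    (he : e * e = e) (hf : f * f = f) :
    e * f = e ↔ (star f * f) * (star e * e) * (star f * f) = star e * e := by
  constructor
  · intro h
    have hqs : (star e * e) * (star f * f) = star e * e := by
      conv_lhs => rw [show star e * e = star e * (e * f) by rw [h]]
      simp only [mul_assoc, mA hreg]
      rw [h]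
    have hsq : (star f * f) * (star e * e) = star e * e := by
      have h' := congrArg star hqs
      simp only [star_mul, star_star, mul_assoc] at h' ⊢
      exact h'
    rw [hsq, hqs]
  · intro h
    have hss : (star f * f) * (star f * f) = star f * f := (proj_star_mul hreg f).1
    have hqs : (star e * e) * (star f * f) = star e * e := by
      conv_lhs => rw [← h]
      rw [mul_assoc, hss, h]
    have hsf : (star f * f) * f = star f * f := by rw [mul_assoc, hf]
    have hqf : (star e * e) * f = star e * e := by
      conv_lhs => rw [← hqs]
      rw [mul_assoc, hsf, hqs]
    conv_lhs => rw [show e = e * (star e * e) from (mA hreg e).symm]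
    rw [mul_assoc, hqf, mA hreg]

lemma basic2L (hreg : ∀ a : T, a * star a * a = a) {e f : T}
    (he : e * e = e) (hf : f * f = f) :
    e * f = f ↔ (e * star e) * (f * star f) * (e * star e) = f * star f := by
  have h1 := basicL hreg (idem_star hf) (idem_star he)
  rw [star_star, star_star] at h1
  calc e * f = f ↔ star (e * f) = star f := star_injective.eq_iff.symm
    _ ↔ star f * star e = star f := by rw [star_mul]
    _ ↔ (e * star e) * (f * star f) * (e * star e) = f * star f := h1

lemma basic_idem {e f : T} (he : e * e = e) (hf : f * f = f)
    (h : e * f = e ∨ e * f = f ∨ f * e = e ∨ f * e = f) :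
    (e * f) * (e * f) = e * f := by
  rcases h with h | h | h | h
  · rw [h, he]
  · rw [h, hf]
  · calc (e * f) * (e * f) = e * ((f * e) * f) := by rw [mul_assoc, ← mul_assoc f e f]
      _ = e * (e * f) := by rw [h]
      _ = e * f := by rw [← mul_assoc, he]
  · calc (e * f) * (e * f) = e * ((f * e) * f) := by rw [mul_assoc, ← mul_assoc f e f]
      _ = e * (f * f) := by rw [h]
      _ = e * f := by rw [hf]

end Aux

/-- Let `S, S'` be regular *-semigroups with projection sets `P, P'`, and
let `ψ : S → S'` restrict to a bijection `P → P'` satisfying `ψ(pqp) = ψp ψq ψp` for all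
projections `p, q` (an isomorphism of projection algebras).  Then
`Φ(e) = ψ(e e*) ψ(e* e)` restricts to a bijection between the idempotent sets such that
(i) `Φ(e*) = Φ(e)*` for idempotents `e`;
(ii) `(e, f)` is a basic pair iff `(Φ e, Φ f)` is a basic pair;
(iii) `Φ(ef) = Φ(e) Φ(f)` for every basic pair `(e, f)`.
In particular the projection algebra determines the biordered set up to isomorphism. -/
theorem stmt7 {S S' : Type*} [Semigroup S] [StarMul S] [Semigroup S'] [StarMul S']
    (hregS : ∀ a : S, a * star a * a = a)
    (hregS' : ∀ a : S', a * star a * a = a)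
    (ψ : S → S')
    (hbij : Set.BijOn ψ {p : S | p * p = p ∧ star p = p}
      {p' : S' | p' * p' = p' ∧ star p' = p'})
    (hmor : ∀ p q : S, (p * p = p ∧ star p = p) → (q * q = q ∧ star q = q) →
      ψ (p * q * p) = ψ p * ψ q * ψ p) :
    let Φ : S → S' := fun e => ψ (e * star e) * ψ (star e * e)
    Set.BijOn Φ {e : S | e * e = e} {e' : S' | e' * e' = e'} ∧
    (∀ e : S, e * e = e → Φ (star e) = star (Φ e)) ∧
    (∀ e f : S, e * e = e → f * f = f →
      ((e * f = e ∨ e * f = f ∨ f * e = e ∨ f * e = f) ↔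
        (Φ e * Φ f = Φ e ∨ Φ e * Φ f = Φ f ∨ Φ f * Φ e = Φ e ∨ Φ f * Φ e = Φ f))) ∧
    (∀ e f : S, e * e = e → f * f = f →
      (e * f = e ∨ e * f = f ∨ f * e = e ∨ f * e = f) →
      Φ (e * f) = Φ e * Φ f) := by
  intro Φ
  -- basic data for an idempotent `e` of `S`
  have main : ∀ e : S, e * e = e →
      (Φ e * Φ e = Φ e ∧ Φ e * star (Φ e) = ψ (e * star e) ∧
        star (Φ e) * Φ e = ψ (star e * e)) := by
    intro e he
    obtain ⟨hpq, hpqp, hqpq⟩ := idem_decomp hregS he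
    have hp := proj_mul_star hregS e
    have hq := proj_star_mul hregS e
    have hp' := hbij.mapsTo hp
    have hq' := hbij.mapsTo hq
    have h1 : ψ (e * star e) * ψ (star e * e) * ψ (e * star e) = ψ (e * star e) := by
      rw [← hmor _ _ hp hq, hpqp]
    have h2 : ψ (star e * e) * ψ (e * star e) * ψ (star e * e) = ψ (star e * e) := by
      rw [← hmor _ _ hq hp, hqpq]
    obtain ⟨a, b, c⟩ := pq_idem hp'.1 hp'.2 hq'.1 hq'.2 h1 h2
    exact ⟨a, b, c⟩
  have htrans : ∀ a b : S, (a * a = a ∧ star a = a) → (b * b = b ∧ star b = b) →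
      (a * b * a = b ↔ ψ a * ψ b * ψ a = ψ b) := by
    intro a b ha hb
    constructor
    · intro h; rw [← hmor a b ha hb, h]
    · intro h
      have h2 : ψ (a * b * a) = ψ b := by rw [hmor a b ha hb]; exact h
      exact hbij.injOn (proj_conj hregS ha.1 ha.2 hb.1 hb.2) hb h2
  have case1 : ∀ e f : S, e * e = e → f * f = f → (e * f = e ↔ Φ e * Φ f = Φ e) := by
    intro e f he hf
    obtain ⟨hΦe, hpe, hqe⟩ := main e he
    obtain ⟨hΦf, hpf, hqf⟩ := main f hf
    calc e * f = e
        ↔ (star f * f) * (star e * e) * (star f * f) = star e * e := basicL hregS he hf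
      _ ↔ ψ (star f * f) * ψ (star e * e) * ψ (star f * f) = ψ (star e * e) :=
          htrans _ _ (proj_star_mul hregS f) (proj_star_mul hregS e)
      _ ↔ (star (Φ f) * Φ f) * (star (Φ e) * Φ e) * (star (Φ f) * Φ f)
            = star (Φ e) * Φ e := by rw [hqe, hqf]
      _ ↔ Φ e * Φ f = Φ e := (basicL hregS' hΦe hΦf).symm
  have case2 : ∀ e f : S, e * e = e → f * f = f → (e * f = f ↔ Φ e * Φ f = Φ f) := by
    intro e f he hf
    obtain ⟨hΦe, hpe, hqe⟩ := main e he
    obtain ⟨hΦf, hpf, hqf⟩ := main f hf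
    calc e * f = f
        ↔ (e * star e) * (f * star f) * (e * star e) = f * star f := basic2L hregS he hf
      _ ↔ ψ (e * star e) * ψ (f * star f) * ψ (e * star e) = ψ (f * star f) :=
          htrans _ _ (proj_mul_star hregS e) (proj_mul_star hregS f)
      _ ↔ (Φ e * star (Φ e)) * (Φ f * star (Φ f)) * (Φ e * star (Φ e))
            = Φ f * star (Φ f) := by rw [hpe, hpf]
      _ ↔ Φ e * Φ f = Φ f := (basic2L hregS' hΦe hΦf).symm
  have hii : ∀ e f : S, e * e = e → f * f = f →
      ((e * f = e ∨ e * f = f ∨ f * e = e ∨ f * e = f) ↔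
        (Φ e * Φ f = Φ e ∨ Φ e * Φ f = Φ f ∨ Φ f * Φ e = Φ e ∨ Φ f * Φ e = Φ f)) :=
    fun e f he hf => or_congr (case1 e f he hf) (or_congr (case2 e f he hf)
      (or_congr (case2 f e hf he) (case1 f e hf he)))
  refine ⟨⟨?_, ?_, ?_⟩, ?_, hii, ?_⟩
  · -- MapsTo
    intro e he
    exact (main e he).1
  · -- InjOn
    intro e he f hf h
    obtain ⟨_, hpe, hqe⟩ := main e he
    obtain ⟨_, hpf, hqf⟩ := main f hf
    have h1 : ψ (e * star e) = ψ (f * star f) := by rw [← hpe, ← hpf, h]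
    have h2 : ψ (star e * e) = ψ (star f * f) := by rw [← hqe, ← hqf, h]
    have e1 : e * star e = f * star f :=
      hbij.injOn (proj_mul_star hregS e) (proj_mul_star hregS f) h1
    have e2 : star e * e = star f * f :=
      hbij.injOn (proj_star_mul hregS e) (proj_star_mul hregS f) h2
    calc e = (e * star e) * (star e * e) := (idem_decomp hregS he).1.symm
      _ = (f * star f) * (star f * f) := by rw [e1, e2]
      _ = f := (idem_decomp hregS hf).1
  · -- SurjOn
    intro e' he'
    obtain ⟨hpq', hpqp', hqpq'⟩ := idem_decomp hregS' he'
    obtain ⟨p, hpP, hpψ⟩ := hbij.surjOn (proj_mul_star hregS' e')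
    obtain ⟨q, hqP, hqψ⟩ := hbij.surjOn (proj_star_mul hregS' e')
    have hpqp : p * q * p = p := by
      refine hbij.injOn (proj_conj hregS hpP.1 hpP.2 hqP.1 hqP.2) hpP ?_
      rw [hmor p q hpP hqP, hpψ, hqψ, hpqp']
    have hqpq : q * p * q = q := by
      refine hbij.injOn (proj_conj hregS hqP.1 hqP.2 hpP.1 hpP.2) hqP ?_
      rw [hmor q p hqP hpP, hpψ, hqψ, hqpq']
    obtain ⟨hidem, hpp, hqq⟩ := pq_idem hpP.1 hpP.2 hqP.1 hqP.2 hpqp hqpq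
    refine ⟨p * q, hidem, ?_⟩
    show ψ ((p * q) * star (p * q)) * ψ (star (p * q) * (p * q)) = e'
    rw [hpp, hqq, hpψ, hqψ, hpq']
  · -- (i)
    intro e he
    obtain ⟨hΦe, hpe, hqe⟩ := main e he
    show ψ (star e * star (star e)) * ψ (star (star e) * star e) = star (Φ e)
    rw [star_star]
    have hst : star (Φ e) = ψ (star e * e) * ψ (e * star e) := by
      show star (ψ (e * star e) * ψ (star e * e)) = _
      rw [star_mul, (hbij.mapsTo (proj_star_mul hregS e)).2,
        (hbij.mapsTo (proj_mul_star hregS e)).2]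
    rw [hst]
  · -- (iii)
    intro e f he hf hbasic
    obtain ⟨hΦe, hpe, hqe⟩ := main e he
    obtain ⟨hΦf, hpf, hqf⟩ := main f hf
    have hΦef : (Φ e * Φ f) * (Φ e * Φ f) = Φ e * Φ f :=
      basic_idem hΦe hΦf ((hii e f he hf).mp hbasic)
    obtain ⟨hform1, hform2⟩ := prod_forms hregS he hf
    obtain ⟨hform1', hform2'⟩ := prod_forms hregS' hΦe hΦf
    have hq := proj_star_mul hregS e
    have hr := proj_mul_star hregS f
    have hqrq := proj_conj hregS hq.1 hq.2 hr.1 hr.2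
    have hrqr := proj_conj hregS hr.1 hr.2 hq.1 hq.2
    show ψ ((e * f) * star (e * f)) * ψ (star (e * f) * (e * f)) = Φ e * Φ f
    rw [hform1, hform2,
      hmor _ _ (proj_mul_star hregS e) hqrq,
      hmor _ _ (proj_star_mul hregS f) hrqr,
      hmor _ _ hq hr, hmor _ _ hr hq,
      ← hpe, ← hqe, ← hpf, ← hqf,
      ← (idem_decomp hregS' hΦef).1, hform1', hform2']
end

section
/- Let Y be a set, X ⊆ Y a subset, R a set of pairs of nonempty words over X, and Q a set of pairs of nonempty words over Y; write R♯ and Q♯ for the semigroup congruences on the free semigroups X⁺ and Y⁺ generated by R and Q respectively. Suppose: (1) X ⊆ Y (so X⁺ embeds in Y⁺); (2) each pair of R, viewed as a pair of words over Y, lies in Q♯; (3) every letter y ∈ Y is Q♯-equivalent to some word over X; (4) there is a semigroup homomorphism φ : Y⁺ → X⁺/R♯ such that every pair of Q lies in the kernel of φ and xφ = [x]_R for every x ∈ X. Then the quotient semigroups X⁺/R♯ and Y⁺/Q♯ are isomorphic. -/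
/-!
A Tietze transformation: the inclusion `X⁺ → Y⁺` descends to `ψ : X⁺/R♯ → Y⁺/Q♯` by (2), and `φ`
descends to `χ : Y⁺/Q♯ → X⁺/R♯` by (4). Both quotients are generated by the classes of letters,
so it suffices to check `χ ∘ ψ = id` and `ψ ∘ χ = id` on letters: the first is the normalisation
`xφ = [x]_R`, and the second follows from (3), since a letter `y ≡ w (mod Q♯)` with `w` a word over
`X` gives `ψ (χ [y]) = ψ (χ (ψ [w])) = ψ [w] = [y]`.
-/

namespace Con

variable {M P : Type*} [Mul M] [Mul P]

def liftMulHom (c : Con M) (f : M →ₙ* P) (H : c ≤ ker f) : c.Quotient →ₙ* P where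
  toFun q := c.liftOn q f H
  map_mul' x y := Con.induction_on₂ x y fun a b => map_mul f a b

theorem mulHom_ext {c : Con M} {f g : c.Quotient →ₙ* P} (h : ∀ a : M, f a = g a) : f = g :=
  MulHom.ext fun q => c.induction_on q h

end Con

namespace FreeSemigroup

variable {α β : Type*}

theorem quotient_mulHom_ext {P : Type*} [Mul P] {c : Con (FreeSemigroup α)}
    {f g : c.Quotient →ₙ* P} (h : ∀ a : α, f (of a) = g (of a)) : f = g := by
  have hcomp : f.comp c.mkMulHom = g.comp c.mkMulHom := hom_ext (funext h)
  exact Con.mulHom_ext fun w => DFunLike.congr_fun hcomp w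

section Tietze

variable (ι : α → β) {R : FreeSemigroup α → FreeSemigroup α → Prop}
  {Q : FreeSemigroup β → FreeSemigroup β → Prop}
  (hRQ : ∀ u v, R u v → conGen Q (map ι u) (map ι v))
  (φ : FreeSemigroup β →ₙ* (conGen R).Quotient) (hφQ : ∀ u v, Q u v → φ u = φ v)

def quotientMap : (conGen R).Quotient →ₙ* (conGen Q).Quotient :=
  (conGen R).liftMulHom ((conGen Q).mkMulHom.comp (map ι))
    (Con.conGen_le.2 fun u v huv => (conGen Q).eq.2 (hRQ u v huv))

def quotientLift : (conGen Q).Quotient →ₙ* (conGen R).Quotient :=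
  (conGen Q).liftMulHom φ ((Con.conGen_le (c := Con.ker φ)).2 hφQ)

theorem quotientLift_comp_quotientMap (hφι : ∀ a, φ (of (ι a)) = of a) :
    (quotientLift φ hφQ).comp (quotientMap ι hRQ) = MulHom.id _ :=
  quotient_mulHom_ext hφι

theorem quotientMap_comp_quotientLift (hφι : ∀ a, φ (of (ι a)) = of a)
    (hgen : ∀ b, ∃ w, conGen Q (of b) (map ι w)) :
    (quotientMap ι hRQ).comp (quotientLift φ hφQ) = MulHom.id _ := by
  refine quotient_mulHom_ext fun b => ?_
  obtain ⟨w, hw⟩ := hgen b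
  have hb : (of b : (conGen Q).Quotient) = quotientMap ι hRQ w := (conGen Q).eq.2 hw
  have hret : quotientLift φ hφQ (quotientMap ι hRQ w) = w :=
    DFunLike.congr_fun (quotientLift_comp_quotientMap ι hRQ φ hφQ hφι) (w : (conGen R).Quotient)
  calc quotientMap ι hRQ (quotientLift φ hφQ (of b))
      = quotientMap ι hRQ (quotientLift φ hφQ (quotientMap ι hRQ w)) := by rw [hb]
    _ = quotientMap ι hRQ w := by rw [hret]
    _ = of b := hb.symm

def quotientMulEquiv (hφι : ∀ a, φ (of (ι a)) = of a)
    (hgen : ∀ b, ∃ w, conGen Q (of b) (map ι w)) :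
    (conGen R).Quotient ≃* (conGen Q).Quotient :=
  MulHom.toMulEquiv (quotientMap ι hRQ) (quotientLift φ hφQ)
    (quotientLift_comp_quotientMap ι hRQ φ hφQ hφι)
    (quotientMap_comp_quotientLift ι hRQ φ hφQ hφι hgen)

end Tietze

end FreeSemigroup

/-- Let `Y` be a set, `X ⊆ Y`, `R` a set of pairs of nonempty words over
`X` and `Q` a set of pairs of nonempty words over `Y`, generating semigroup congruences
`R♯` on `X⁺ = FreeSemigroup X` and `Q♯` on `Y⁺ = FreeSemigroup Y`.  Suppose:
(1) `X ⊆ Y` (words over `X` are mapped into `Y⁺` by `FreeSemigroup.map Subtype.val`);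
(2) every pair of `R`, viewed in `Y⁺`, lies in `Q♯`;
(3) every letter `y ∈ Y` is `Q♯`-equivalent to a word over `X`;
(4) there is a homomorphism `φ : Y⁺ → X⁺/R♯` with `Q` contained in its kernel and
`xφ = [x]_R` for `x ∈ X`.
Then `X⁺/R♯ ≅ Y⁺/Q♯`. -/
theorem stmt8 {Y : Type*} (X : Set Y)
    (R : FreeSemigroup X → FreeSemigroup X → Prop)
    (Q : FreeSemigroup Y → FreeSemigroup Y → Prop)
    (hRQ : ∀ u v : FreeSemigroup X, R u v →
      conGen Q (FreeSemigroup.map (Subtype.val) u) (FreeSemigroup.map (Subtype.val) v))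
    (hgen : ∀ y : Y, ∃ w : FreeSemigroup X,
      conGen Q (FreeSemigroup.of y) (FreeSemigroup.map (Subtype.val) w))
    (φ : FreeSemigroup Y →ₙ* (conGen R).Quotient)
    (hφQ : ∀ u v : FreeSemigroup Y, Q u v → φ u = φ v)
    (hφX : ∀ x : X, φ (FreeSemigroup.of (x : Y)) = ↑(FreeSemigroup.of x)) :
    Nonempty ((conGen R).Quotient ≃* (conGen Q).Quotient) :=
  ⟨FreeSemigroup.quotientMulEquiv Subtype.val hRQ φ hφQ hφX hgen⟩
end

section
/- Let P be a projection algebra and let ∼ be the semigroup congruence on the free semigroup on the alphabet X_P = {x_p : p ∈ P} generated by the relations x_p² = x_p, (x_p x_q)² = x_p x_q, and x_p x_q x_p = x_{qθ_p} for all p, q ∈ P. If p, q ∈ P satisfy q ≤F p (i.e. q = pθ_q), then x_p x_q ∼ x_{p'} x_q where p' = qθ_p, and moreover q F p' and p' ≤ p. -/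
/-- The defining relations of the free projection-generated regular *-semigroup
`PG(P)`: `x_p² = x_p`, `(x_p x_q)² = x_p x_q`, and `x_p x_q x_p = x_{qθ_p}`,
for `p, q ∈ P`, as a binary relation on the free semigroup over `P`. -/
def PGrel {P : Type*} (A : ProjectionAlgebra P) :
    FreeSemigroup P → FreeSemigroup P → Prop := fun u v =>
  (∃ p : P, u = FreeSemigroup.of p * FreeSemigroup.of p ∧ v = FreeSemigroup.of p) ∨
  (∃ p q : P, u = (FreeSemigroup.of p * FreeSemigroup.of q) *
      (FreeSemigroup.of p * FreeSemigroup.of q) ∧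
    v = FreeSemigroup.of p * FreeSemigroup.of q) ∨
  (∃ p q : P, u = FreeSemigroup.of p * FreeSemigroup.of q * FreeSemigroup.of p ∧
    v = FreeSemigroup.of (A.th p q))

/-- The word `x_h x_{t₁} ⋯ x_{t_m}` in the free semigroup. -/
def word1 {P : Type*} (h : P) (t : List P) : FreeSemigroup P :=
  t.foldl (fun w p => w * FreeSemigroup.of p) (FreeSemigroup.of h)

/-- The reversed word `x_{t_m} ⋯ x_{t₁} x_h` in the free semigroup. -/
def word1r {P : Type*} (h : P) (t : List P) : FreeSemigroup P :=
  t.foldl (fun w p => FreeSemigroup.of p * w) (FreeSemigroup.of h)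

/-- Let `∼` be the congruence on the free semigroup over `X_P` generated
by the relations `x_p² = x_p`, `(x_p x_q)² = x_p x_q`, `x_p x_q x_p = x_{qθ_p}`.
If `q ≤F p`, then `x_p x_q ∼ x_{p'} x_q` where `p' = qθ_p`, and moreover `q F p'` and
`p' ≤ p`. -/
theorem stmt9 {P : Type*} (A : ProjectionAlgebra P) (p q : P) (h : A.leF q p) :
    conGen (PGrel A) (FreeSemigroup.of p * FreeSemigroup.of q)
      (FreeSemigroup.of (A.th p q) * FreeSemigroup.of q) ∧
    A.Frel q (A.th p q) ∧
    A.le (A.th p q) p := by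
  refine ⟨?_, ⟨?_, ?_⟩, ?_⟩
  · have e2 : conGen (PGrel A)
        ((FreeSemigroup.of p * FreeSemigroup.of q) * (FreeSemigroup.of p * FreeSemigroup.of q))
        (FreeSemigroup.of p * FreeSemigroup.of q) :=
      ConGen.Rel.of _ _ (Or.inr (Or.inl ⟨p, q, rfl, rfl⟩))
    have e3 : conGen (PGrel A)
        (FreeSemigroup.of p * FreeSemigroup.of q * FreeSemigroup.of p)
        (FreeSemigroup.of (A.th p q)) :=
      ConGen.Rel.of _ _ (Or.inr (Or.inr ⟨p, q, rfl, rfl⟩))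
    have e4 : conGen (PGrel A)
        ((FreeSemigroup.of p * FreeSemigroup.of q * FreeSemigroup.of p) * FreeSemigroup.of q)
        (FreeSemigroup.of (A.th p q) * FreeSemigroup.of q) :=
      (conGen (PGrel A)).mul e3 ((conGen (PGrel A)).refl _)
    refine (conGen (PGrel A)).trans ((conGen (PGrel A)).symm e2) ?_
    rw [show (FreeSemigroup.of p * FreeSemigroup.of q) * (FreeSemigroup.of p * FreeSemigroup.of q)
      = (FreeSemigroup.of p * FreeSemigroup.of q * FreeSemigroup.of p) * FreeSemigroup.of q by
        rw [mul_assoc, mul_assoc, mul_assoc]]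
    exact e4
  · show q = A.th q (A.th p q)
    have key := A.P5 p q p
    rw [A.P1] at key
    nth_rewrite 3 [h]
    rw [key, ← h]
  · show A.th p q = A.th (A.th p q) q
    rw [← A.P4]
    nth_rewrite 3 [h]
    rw [A.P5 q p p, A.P3]
  · show A.th p q = A.th p (A.th p q)
    rw [A.P2]
end

section
/- Let P be a projection algebra and let ∼ be the semigroup congruence on the free semigroup on the alphabet X_P = {x_p : p ∈ P} generated by the relations x_p² = x_p, (x_p x_q)² = x_p x_q, and x_p x_q x_p = x_{qθ_p} for all p, q ∈ P. Then for any p₁, …, p_k ∈ P there exist p₁', …, p_k' ∈ P such that p₁' F p₂' F ⋯ F p_k', p_i' ≤ p_i for all i, and x_{p₁}⋯x_{p_k} ∼ x_{p₁'}⋯x_{p_k'}. -/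
namespace Stmt10Aux

open FreeSemigroup

variable {P : Type*} (A : ProjectionAlgebra P)

theorem le_refl (p : P) : A.le p p := (A.P1 p).symm

theorem le_trans {p q r : P} (h1 : A.le p q) (h2 : A.le q r) : A.le p r := by
  unfold ProjectionAlgebra.le at *
  have key : p = A.th r (A.th q (A.th r p)) := by
    conv_lhs => rw [h1, h2]
    rw [A.P4]
  have : A.th r p = p := by
    conv_lhs => rw [key]
    rw [A.P2, ← key]
  exact this.symm

/-- If `a ≤F b` and `a' ≤ a` then `a' ≤F b`. -/
theorem leF_of_le_leF {a b a' : P} (hab : a = A.th a b) (ha' : a' = A.th a a') :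
    a' = A.th a' b := by
  conv_rhs => rw [ha']
  rw [← A.P4, ← hab, A.P3, ← ha']

theorem frel_pair (p q : P) : A.Frel (A.th p q) (A.th q p) := by
  constructor
  · show A.th p q = A.th (A.th p q) (A.th q p)
    rw [← A.P4, A.P5, A.P3]
  · show A.th q p = A.th (A.th q p) (A.th p q)
    rw [← A.P4, A.P5, A.P3]

/-- If `c ≤F d` then `c F (cθ_d)`. -/
theorem frel_step {c d : P} (hcd : c = A.th c d) : A.Frel c (A.th d c) := by
  constructor
  · show c = A.th c (A.th d c)
    rw [A.P3, ← hcd]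
  · show A.th d c = A.th (A.th d c) c
    rw [← A.P4, A.P3, A.P3]

theorem forall2_le_trans {l1 l2 l3 : List P} (h12 : List.Forall₂ A.le l1 l2)
    (h23 : List.Forall₂ A.le l2 l3) : List.Forall₂ A.le l1 l3 := by
  induction h12 generalizing l3 with
  | nil => cases h23; exact .nil
  | cons h hs ih =>
    cases h23 with
    | cons h' hs' => exact .cons (le_trans A h h') (ih hs')

theorem rel1 (p : P) : conGen (PGrel A) (of p * of p) (of p) :=
  ConGen.Rel.of _ _ (Or.inl ⟨p, rfl, rfl⟩)

theorem rel2 (p q : P) :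
    conGen (PGrel A) ((of p * of q) * (of p * of q)) (of p * of q) :=
  ConGen.Rel.of _ _ (Or.inr (Or.inl ⟨p, q, rfl, rfl⟩))

theorem rel3 (p q : P) :
    conGen (PGrel A) (of p * of q * of p) (of (A.th p q)) :=
  ConGen.Rel.of _ _ (Or.inr (Or.inr ⟨p, q, rfl, rfl⟩))

theorem pairL (p q : P) :
    conGen (PGrel A) (of p * of q) (of (A.th p q) * of q) := by
  refine Con.trans _ (Con.symm _ (rel2 A p q)) ?_
  have h3 := Con.mul _ (rel3 A p q) (Con.refl (conGen (PGrel A)) (of q))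
  rw [show (of p * of q) * (of p * of q) = (of p * of q * of p) * of q by
    simp [mul_assoc]]
  exact h3

theorem pairR (p q : P) :
    conGen (PGrel A) (of p * of q) (of p * of (A.th q p)) := by
  refine Con.trans _ (Con.symm _ (rel2 A p q)) ?_
  have h3 := Con.mul _ (Con.refl (conGen (PGrel A)) (of p)) (rel3 A q p)
  rw [show (of p * of q) * (of p * of q) = of p * (of q * of p * of q) by
    simp [mul_assoc]]
  exact h3

theorem foldl_mul (t : List P) (a b : FreeSemigroup P) :
    t.foldl (fun w p => w * FreeSemigroup.of p) (a * b)
      = a * t.foldl (fun w p => w * FreeSemigroup.of p) b := by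
  induction t generalizing b with
  | nil => rfl
  | cons x xs ih =>
    simp only [List.foldl_cons]
    rw [mul_assoc, ih]

theorem word1_cons (h q : P) (t : List P) :
    word1 h (q :: t) = FreeSemigroup.of h * word1 q t := by
  show t.foldl (fun w p => w * FreeSemigroup.of p) (of h * of q)
      = of h * t.foldl (fun w p => w * FreeSemigroup.of p) (of q)
  rw [foldl_mul]

theorem foldl_cong (t : List P) {a b : FreeSemigroup P}
    (hab : conGen (PGrel A) a b) :
    conGen (PGrel A) (t.foldl (fun w p => w * FreeSemigroup.of p) a)
      (t.foldl (fun w p => w * FreeSemigroup.of p) b) := by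
  induction t generalizing a b with
  | nil => exact hab
  | cons x xs ih =>
    exact ih (Con.mul _ hab (Con.refl (conGen (PGrel A)) (of x)))

theorem sweep (l : List P) : ∀ c q : P, A.le c q → List.Chain A.Frel q l →
    ∃ l', List.Chain A.Frel c l' ∧ List.Forall₂ A.le l' l ∧
      conGen (PGrel A) (word1 c l) (word1 c l') := by
  induction l with
  | nil =>
    intro c q _ _
    exact ⟨[], .nil, .nil, Con.refl _ _⟩
  | cons d l2 ih =>
    intro c q hcq hch
    obtain ⟨hqd, hch2⟩ := List.chain_cons.mp hch
    have hcd : c = A.th c d := leF_of_le_leF A hqd.1 hcq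
    have hdd' : A.le (A.th d c) d := (A.P2 d c).symm
    obtain ⟨l2', hch', hf2, hw⟩ := ih (A.th d c) d hdd' hch2
    refine ⟨A.th d c :: l2', List.chain_cons.mpr ⟨frel_step A hcd, hch'⟩,
      .cons hdd' hf2, ?_⟩
    rw [word1_cons, word1_cons]
    simp only [word1]
    rw [← foldl_mul]
    refine Con.trans _ (foldl_cong A l2 (pairR A c d)) ?_
    rw [foldl_mul]
    exact Con.mul _ (Con.refl (conGen (PGrel A)) (of c)) hw

end Stmt10Aux

/-- Let `∼` be the congruence on the free semigroup over `X_P` generated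
by `x_p² = x_p`, `(x_p x_q)² = x_p x_q`, `x_p x_q x_p = x_{qθ_p}`.  For any nonempty
word `x_{p₁}⋯x_{p_k}` (encoded by head `h` and tail `t`) there exist `p₁', …, p_k'`
with `p₁' F ⋯ F p_k'`, `p_i' ≤ p_i` for all `i`, and
`x_{p₁}⋯x_{p_k} ∼ x_{p₁'}⋯x_{p_k'}`. -/


theorem stmt10 {P : Type*} (A : ProjectionAlgebra P) (h : P) (t : List P) :
    ∃ (h' : P) (t' : List P),
      List.Chain A.Frel h' t' ∧
      A.le h' h ∧
      List.Forall₂ A.le t' t ∧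
      conGen (PGrel A) (word1 h t) (word1 h' t') := by
  open Stmt10Aux FreeSemigroup in
  induction t generalizing h with
  | nil => exact ⟨h, [], .nil, le_refl A h, .nil, Con.refl _ _⟩
  | cons q s ih =>
    obtain ⟨q1, t1, hch, hq1, hf1, hw⟩ := ih q
    have hcq1 : A.le (A.th q1 h) q1 := (A.P2 q1 h).symm
    obtain ⟨t1', hch', hf', hw2⟩ := sweep A t1 (A.th q1 h) q1 hcq1 hch
    refine ⟨A.th h q1, A.th q1 h :: t1',
      List.chain_cons.mpr ⟨frel_pair A h q1, hch'⟩, (A.P2 h q1).symm,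
      .cons (le_trans A hcq1 hq1) (forall2_le_trans A hf' hf1), ?_⟩
    have front : conGen (PGrel A) (of h * of q1) (of (A.th h q1) * of (A.th q1 h)) := by
      refine Con.trans _ (pairL A h q1) ?_
      have h2 := pairR A (A.th h q1) q1
      rw [A.P3] at h2
      exact h2
    rw [word1_cons, word1_cons]
    refine Con.trans _ (Con.mul _ (Con.refl (conGen (PGrel A)) (of h)) hw) ?_
    simp only [word1]
    rw [← foldl_mul]
    refine Con.trans _ (foldl_cong A t1 front) ?_
    rw [foldl_mul]
    exact Con.mul _ (Con.refl (conGen (PGrel A)) (of (A.th h q1))) hw2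
end

section
/- Let P be a projection algebra and let ∼ be the semigroup congruence on the free semigroup on the alphabet X_P = {x_p : p ∈ P} generated by the relations x_p² = x_p, (x_p x_q)² = x_p x_q, and x_p x_q x_p = x_{qθ_p} for all p, q ∈ P. If p ∈ P and (e, f) is a p-linked pair, then x_e x_{eθ_p} x_f ∼ x_e x_{fθ_p} x_f. -/
/-- Let `∼` be the congruence on the free semigroup over `X_P` generated
by `x_p² = x_p`, `(x_p x_q)² = x_p x_q`, `x_p x_q x_p = x_{qθ_p}`.  If `(e, f)` is a
`p`-linked pair, then `x_e x_{eθ_p} x_f ∼ x_e x_{fθ_p} x_f`. -/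
theorem stmt11 {P : Type*} (A : ProjectionAlgebra P) (p e f : P)
    (h : A.Linked p e f) :
    conGen (PGrel A)
      (FreeSemigroup.of e * FreeSemigroup.of (A.th p e) * FreeSemigroup.of f)
      (FreeSemigroup.of e * FreeSemigroup.of (A.th p f) * FreeSemigroup.of f) := by
  let c := conGen (PGrel A)
  show c _ _
  rw [← c.eq]
  simp only [Con.coe_mul]
  set E : P → c.Quotient := fun q => ((FreeSemigroup.of q : FreeSemigroup P) : c.Quotient)
    with hE
  have hR2 : ∀ a b : P, (E a * E b) * (E a * E b) = E a * E b := by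
    intro a b
    simp only [hE, ← Con.coe_mul]
    exact c.eq.mpr (ConGen.Rel.of _ _ (Or.inr (Or.inl ⟨a, b, rfl, rfl⟩)))
  have hR3 : ∀ a b : P, E a * E b * E a = E (A.th a b) := by
    intro a b
    simp only [hE, ← Con.coe_mul]
    exact c.eq.mpr (ConGen.Rel.of _ _ (Or.inr (Or.inr ⟨a, b, rfl, rfl⟩)))
  calc E e * E (A.th p e) * E f
      = E e * (E p * E e * E p) * E f := by rw [hR3]
    _ = (E e * E p) * (E e * E p) * E f := by simp only [mul_assoc]
    _ = (E e * E p) * E f := by rw [hR2]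
    _ = E e * ((E p * E f) * (E p * E f)) := by rw [hR2]; simp only [mul_assoc]
    _ = E e * (E p * E f * E p) * E f := by simp only [mul_assoc]
    _ = E e * E (A.th p f) * E f := by rw [hR3]
end

section
/- Let P be a projection algebra, p ∈ P, and suppose (e, f) is a p-linked pair. Then (e, fθ_p) and (eθ_p, f) are also p-linked pairs, with fθ_p ≤ p and eθ_p ≤ p respectively; in particular both are special p-linked pairs. -/
/-- If `(e, f)` is a `p`-linked pair in a projection algebra `P`, then
`(e, fθ_p)` and `(eθ_p, f)` are also `p`-linked, with `fθ_p ≤ p` and `eθ_p ≤ p`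
respectively; in particular both are special `p`-linked pairs. -/
theorem stmt12 {P : Type*} (A : ProjectionAlgebra P) (p e f : P)
    (h : A.Linked p e f) :
    (A.Linked p e (A.th p f) ∧ A.le (A.th p f) p) ∧
    (A.Linked p (A.th p e) f ∧ A.le (A.th p e) p) := by
  obtain ⟨h1, h2⟩ := h
  refine ⟨⟨⟨?_, ?_⟩, (A.P2 p f).symm⟩, ⟨⟨?_, ?_⟩, (A.P2 p e).symm⟩⟩
  · rw [← A.P4, A.P2, ← h1]
  · rw [A.P2]; exact h2
  · rw [A.P2]; exact h1
  · rw [← A.P4, A.P2, ← h2]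
end

section
/- Let P be a projection algebra, let F be the free semigroup on the alphabet X_P = {x_p : p ∈ P}, let ∼ be the semigroup congruence on F generated by the relations x_p² = x_p, (x_p x_q)² = x_p x_q, and x_p x_q x_p = x_{qθ_p} for all p, q ∈ P, and let T = F/∼. Then: (a) there is a unary operation * on T satisfying [x_{p₁}⋯x_{p_k}]* = [x_{p_k}⋯x_{p₁}] for every word x_{p₁}⋯x_{p_k}, and with this operation T is a regular *-semigroup (a** = a, a a* a = a, (ab)* = b* a* for all a, b ∈ T); (b) the map ι : P → T, p ↦ [x_p], is injective; (c) the image of ι is exactly the set of projections of T, i.e. the set of t ∈ T with t² = t = t*; (d) ι(p)ι(q)ι(p) = ι(qθ_p) for all p, q ∈ P, so ι is an isomorphism from P onto the projection algebra of T. -/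
/-!
Word reversal respects the three families of defining relations, so it descends to an
involution `*` of `T`. Collapsing a word from the inside out with `x_h x_p x_h = x_{pθ_h}`
shows that `w w* = x_p` for a single projection `p`, and that this `x_p` is a left identity
for `w`; this gives regularity, and a projection `t = t t*` is then some `x_p`.
For injectivity, let a word act on `P` by composing the maps `θ_p`: axioms (P2), (P5), (P4)
say exactly that the relations act trivially, and by (P1), (P3) the map `θ_p` determines `p`.
-/

open MulOpposite

namespace FreeSemigroup

variable {α : Type*}

def reverse (w : FreeSemigroup α) : FreeSemigroup α :=
  unop (lift (fun a => op (of a)) w)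

@[simp] lemma reverse_of (a : α) : reverse (of a) = of a := rfl

@[simp] lemma reverse_mul (u v : FreeSemigroup α) : reverse (u * v) = reverse v * reverse u := by
  simp [reverse]

@[simp] lemma reverse_reverse (w : FreeSemigroup α) : reverse (reverse w) = w := by
  induction w with
  | ih1 a => rfl
  | ih2 a w _ hw => simp [hw]

lemma reverse_foldl_mul_of (t : List α) (w : FreeSemigroup α) :
    reverse (t.foldl (fun w a => w * of a) w) = t.foldl (fun w a => of a * w) (reverse w) := by
  induction t generalizing w with
  | nil => rfl
  | cons a t ih => simp [ih]

lemma reverse_word1 (h : α) (t : List α) : reverse (word1 h t) = word1r h t :=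
  reverse_foldl_mul_of t (of h)

lemma conGen_rel_reverse {r : FreeSemigroup α → FreeSemigroup α → Prop}
    (hr : ∀ u v, r u v → r (reverse u) (reverse v)) {u v : FreeSemigroup α}
    (h : ConGen.Rel r u v) : ConGen.Rel r (reverse u) (reverse v) := by
  induction h with
  | of u v huv => exact .of _ _ (hr u v huv)
  | refl w => exact .refl _
  | symm _ ih => exact ih.symm
  | trans _ _ ih₁ ih₂ => exact ih₁.trans ih₂
  | mul _ _ ih₁ ih₂ => simpa only [reverse_mul] using ih₂.mul ih₁

end FreeSemigroup

namespace ProjectionAlgebra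

open FreeSemigroup

variable {P : Type*} (A : ProjectionAlgebra P)

lemma th_injective : Function.Injective A.th := by
  intro p q hpq
  have hqp : A.th q p = p := by rw [← hpq, A.P1]
  have hpq' : A.th p q = q := by rw [hpq, A.P1]
  simpa [hqp, hpq', A.P1] using A.P3 p q

/-- The word `x_{p₁} ⋯ x_{p_k}` acts on `P` as `q ↦ qθ_{p₁}⋯θ_{p_k}`. -/
def wordAction : FreeSemigroup P →ₙ* (Function.End P)ᵐᵒᵖ :=
  lift fun p => op (A.th p : Function.End P)

lemma conGen_le_ker_wordAction : conGen (PGrel A) ≤ Con.ker A.wordAction := by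
  refine Con.conGen_le.2 fun u v huv => (Con.ker_rel _).2 (unop_injective ?_)
  rcases huv with ⟨p, rfl, rfl⟩ | ⟨p, q, rfl, rfl⟩ | ⟨p, q, rfl, rfl⟩ <;>
    funext r
  · exact A.P2 p r
  · exact A.P5 p q r
  · exact A.P4 p q r

lemma pgRel_reverse (u v : FreeSemigroup P) (h : PGrel A u v) :
    PGrel A (reverse u) (reverse v) := by
  rcases h with ⟨p, rfl, rfl⟩ | ⟨p, q, rfl, rfl⟩ | ⟨p, q, rfl, rfl⟩
  · exact Or.inl ⟨p, rfl, rfl⟩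
  · exact Or.inr (Or.inl ⟨q, p, by simp, rfl⟩)
  · exact Or.inr (Or.inr ⟨p, q, by simp [mul_assoc], rfl⟩)

abbrev PG : Type _ := (conGen (PGrel A)).Quotient

def toPG (p : P) : A.PG := (of p : FreeSemigroup P)

lemma toPG_injective : Function.Injective A.toPG := fun _ _ hpq =>
  A.th_injective <| congrArg unop <|
    (Con.ker_rel _).1 (A.conGen_le_ker_wordAction ((Con.eq _).1 hpq))

lemma coe_of_mul (p : P) (w : FreeSemigroup P) : ((of p * w : FreeSemigroup P) : A.PG) =
    A.toPG p * w := rfl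

lemma toPG_mul_self (p : P) : A.toPG p * A.toPG p = A.toPG p :=
  (Con.eq _).2 (.of _ _ (Or.inl ⟨p, rfl, rfl⟩))

lemma toPG_mul_toPG_mul_self (p q : P) :
    A.toPG p * A.toPG q * (A.toPG p * A.toPG q) = A.toPG p * A.toPG q :=
  (Con.eq _).2 (.of _ _ (Or.inr (Or.inl ⟨p, q, rfl, rfl⟩)))

lemma toPG_mul_toPG_mul_toPG (p q : P) : A.toPG p * A.toPG q * A.toPG p = A.toPG (A.th p q) :=
  (Con.eq _).2 (.of _ _ (Or.inr (Or.inr ⟨p, q, rfl, rfl⟩)))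

lemma toPG_th_mul_toPG (p q : P) : A.toPG (A.th p q) * A.toPG q = A.toPG p * A.toPG q := by
  rw [← toPG_mul_toPG_mul_toPG, mul_assoc _ (A.toPG p), toPG_mul_toPG_mul_self]

lemma toPG_th_mul_toPG_self (p q : P) :
    A.toPG (A.th p q) * A.toPG p = A.toPG (A.th p q) := by
  rw [← toPG_mul_toPG_mul_toPG, mul_assoc, toPG_mul_self]

instance : StarMul A.PG where
  star a := Con.liftOn a (fun w => (reverse w : A.PG))
    fun _ _ h => (Con.eq _).2 (conGen_rel_reverse A.pgRel_reverse h)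
  star_involutive a := Con.induction_on a fun w => congrArg _ (reverse_reverse w)
  star_mul a b := Con.induction_on₂ a b fun u v => congrArg _ (reverse_mul u v)

lemma star_toPG (p : P) : star (A.toPG p) = A.toPG p := rfl

lemma exists_mul_star_eq_toPG (a : A.PG) :
    ∃ p, a * star a = A.toPG p ∧ A.toPG p * a = a := by
  induction a using Con.induction_on with | H w => ?_
  induction w with
  | ih1 p => exact ⟨p, A.toPG_mul_self p, A.toPG_mul_self p⟩
  | ih2 h w _ ih =>
    obtain ⟨p, hww, hpw⟩ := ih
    refine ⟨A.th h p, ?_, ?_⟩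
    · calc ((of h * w : FreeSemigroup P) : A.PG) * star ↑(of h * w)
          = A.toPG h * (↑w * star ↑w) * A.toPG h := by
            simp only [coe_of_mul, star_mul, star_toPG, mul_assoc]
        _ = A.toPG (A.th h p) := by rw [hww, toPG_mul_toPG_mul_toPG]
    · calc A.toPG (A.th h p) * ↑(of h * w)
          = A.toPG (A.th h p) * (A.toPG p * ↑w) := by
            rw [coe_of_mul, ← mul_assoc, toPG_th_mul_toPG_self, hpw]
        _ = ↑(of h * w) := by rw [← mul_assoc, toPG_th_mul_toPG, mul_assoc, hpw, coe_of_mul]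

lemma mul_star_mul_self (a : A.PG) : a * star a * a = a := by
  obtain ⟨p, hp, hpa⟩ := A.exists_mul_star_eq_toPG a
  rw [hp, hpa]

lemma setOf_isProjection_eq_range_toPG :
    {t : A.PG | t * t = t ∧ star t = t} = Set.range A.toPG := by
  ext t
  constructor
  · rintro ⟨htt, hst⟩
    obtain ⟨p, hp, -⟩ := A.exists_mul_star_eq_toPG t
    exact ⟨p, by rw [← hp, hst, htt]⟩
  · rintro ⟨p, rfl⟩
    exact ⟨A.toPG_mul_self p, A.star_toPG p⟩

end ProjectionAlgebra

/-- Let `T = X_P⁺/∼` be the quotient of the free semigroup on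
`X_P = {x_p : p ∈ P}` by the congruence `∼` generated by `x_p² = x_p`,
`(x_p x_q)² = x_p x_q`, `x_p x_q x_p = x_{qθ_p}`.  Then:
(a) there is a unary operation `*` on `T` with `[x_{p₁}⋯x_{p_k}]* = [x_{p_k}⋯x_{p₁}]`
making `T` a regular *-semigroup;
(b) `ι : P → T`, `p ↦ [x_p]`, is injective;
(c) the image of `ι` is exactly the set of projections of `T`;
(d) `ι(p) ι(q) ι(p) = ι(qθ_p)`, so `ι` is an isomorphism of `P` onto the projection
algebra of `T`. -/
theorem stmt14 {P : Type*} (A : ProjectionAlgebra P) :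
    ∃ st : (conGen (PGrel A)).Quotient → (conGen (PGrel A)).Quotient,
      -- (a) the involution reverses words and makes `T` a regular *-semigroup
      (∀ (h : P) (t : List P),
        st ↑(word1 h t) = (↑(word1r h t) : (conGen (PGrel A)).Quotient)) ∧
      (∀ a, st (st a) = a) ∧
      (∀ a, a * st a * a = a) ∧
      (∀ a b, st (a * b) = st b * st a) ∧
      -- (b) `ι` is injective
      Function.Injective
        (fun p : P => (↑(FreeSemigroup.of p) : (conGen (PGrel A)).Quotient)) ∧
      -- (c) the image of `ι` is the set of projections of `T`
      {t : (conGen (PGrel A)).Quotient | t * t = t ∧ st t = t}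
        = Set.range
            (fun p : P => (↑(FreeSemigroup.of p) : (conGen (PGrel A)).Quotient)) ∧
      -- (d) `ι` respects the projection algebra operations
      (∀ p q : P,
        (↑(FreeSemigroup.of p) : (conGen (PGrel A)).Quotient) *
            ↑(FreeSemigroup.of q) * ↑(FreeSemigroup.of p)
          = ↑(FreeSemigroup.of (A.th p q))) :=
  ⟨star, fun h t => congrArg _ (FreeSemigroup.reverse_word1 h t), star_star,
    A.mul_star_mul_self, star_mul, A.toPG_injective, A.setOf_isProjection_eq_range_toPG,
    A.toPG_mul_toPG_mul_toPG⟩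
end

section
/- Let P be a three-element set, made into a projection algebra by defining qθ_p = p for all p, q ∈ P (the projection algebra of the 3×3 square band; the axioms (P1)–(P5) hold). Then the quotient of the free semigroup on X_P = {x_p : p ∈ P} by the congruence generated by the relations x_p² = x_p, (x_p x_q)² = x_p x_q, and x_p x_q x_p = x_{qθ_p} for all p, q ∈ P is an infinite semigroup. -/
/-- The projection algebra of the 3×3 square band: a three-element set with
`qθ_p = p` for all `p, q`. -/
def SquareBand3 : ProjectionAlgebra (Fin 3) where
  th := fun p _ => p
  P1 := fun _ => rfl
  P2 := fun _ _ => rfl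
  P3 := fun _ _ => rfl
  P4 := fun _ _ _ => rfl
  P5 := fun _ _ _ => rfl

/-! In `PG(P)` for the square band all relations follow from `x_p² = x_p` and `x_p x_q x_p = x_p`.
Both hold for the elements `(p, 0, p)` of a Rees matrix semigroup over `ℤ` whose sandwich matrix is
antisymmetric. Choosing the sandwich matrix with nonzero circulation `m₀₁ + m₁₂ + m₂₀ = 3` around
the triangle, each further factor `x₀x₁x₂` adds `3` to the group coordinate of the image, so the
powers of `x₀x₁x₂` are pairwise distinct in `PG(P)`. -/

@[ext]
structure ReesMatrix {G : Type*} (I Λ : Type*) (m : Λ → I → G) where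
  row : I
  val : G
  col : Λ

namespace ReesMatrix

variable {G I Λ : Type*} {m : Λ → I → G}

instance [AddSemigroup G] : Semigroup (ReesMatrix I Λ m) where
  mul x y := ⟨x.row, x.val + m x.col y.row + y.val, y.col⟩
  mul_assoc x y z := by
    ext <;> simp only [HMul.hMul, Mul.mul, add_assoc]

@[simp]
theorem mk_mul_mk [AddSemigroup G] (i : I) (a : G) (l : Λ) (j : I) (b : G) (μ : Λ) :
    (⟨i, a, l⟩ : ReesMatrix I Λ m) * ⟨j, b, μ⟩ = ⟨i, a + m l j + b, μ⟩ :=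
  rfl

def diag [Zero G] {m : I → I → G} (p : I) : ReesMatrix I I m := ⟨p, 0, p⟩

variable [AddMonoid G] {m : I → I → G}

theorem diag_mul_self {p : I} (h : m p p = 0) : (diag p : ReesMatrix I I m) * diag p = diag p := by
  simp [diag, h]

theorem diag_mul_diag_mul_diag {p q : I} (h : m p q + m q p = 0) :
    (diag p : ReesMatrix I I m) * diag q * diag p = diag p := by
  simp [diag, h]

end ReesMatrix

section PGrel

variable {P S : Type*} [Semigroup S]

theorem conGen_PGrel_le_ker_lift (A : ProjectionAlgebra P) (f : P → S)
    (h_idem : ∀ p, f p * f p = f p)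
    (h_sq : ∀ p q, f p * f q * (f p * f q) = f p * f q)
    (h_th : ∀ p q, f p * f q * f p = f (A.th p q)) :
    conGen (PGrel A) ≤ Con.ker (FreeSemigroup.lift f) := by
  rw [Con.conGen_le]
  rintro u v (⟨p, rfl, rfl⟩ | ⟨p, q, rfl, rfl⟩ | ⟨p, q, rfl, rfl⟩) <;>
    simp only [Con.ker_rel, map_mul, FreeSemigroup.lift_of, h_idem, h_sq, h_th]

end PGrel

def triangleSandwich : Fin 3 → Fin 3 → ℤ := ![![0, 1, -1], ![-1, 0, 1], ![1, -1, 0]]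

theorem triangleSandwich_add_swap (p q : Fin 3) :
    triangleSandwich p q + triangleSandwich q p = 0 := by
  fin_cases p <;> fin_cases q <;> rfl

theorem triangleSandwich_self (p : Fin 3) : triangleSandwich p p = 0 := by
  fin_cases p <;> rfl

theorem conGen_PGrel_squareBand3_le_ker :
    conGen (PGrel SquareBand3) ≤
      Con.ker (FreeSemigroup.lift (ReesMatrix.diag (m := triangleSandwich))) :=
  have h_sandwich p q := ReesMatrix.diag_mul_diag_mul_diag (triangleSandwich_add_swap p q)
  conGen_PGrel_le_ker_lift _ _ (fun p => ReesMatrix.diag_mul_self (triangleSandwich_self p))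
    (fun p q => by rw [← mul_assoc, h_sandwich]) h_sandwich

def cycleWord : ℕ → FreeSemigroup (Fin 3)
  | 0 => .of 0 * .of 1 * .of 2
  | n + 1 => .of 0 * .of 1 * .of 2 * cycleWord n

theorem lift_cycleWord (n : ℕ) :
    FreeSemigroup.lift (ReesMatrix.diag (m := triangleSandwich)) (cycleWord n) =
      ⟨0, 3 * n + 2, 2⟩ := by
  induction n with
  | zero => rfl
  | succ n ih =>
    simp only [cycleWord, map_mul, FreeSemigroup.lift_of, ih, ReesMatrix.diag,
      ReesMatrix.mk_mul_mk, ReesMatrix.mk.injEq]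
    simp [triangleSandwich]
    ring

/-- The quotient of the free semigroup on `X_P = {x_p : p ∈ P}` by the
congruence generated by `x_p² = x_p`, `(x_p x_q)² = x_p x_q`,
`x_p x_q x_p = x_{qθ_p}`, where `P` is the three-element projection algebra of the
3×3 square band, is an infinite semigroup. -/
theorem stmt18 : Infinite (conGen (PGrel SquareBand3)).Quotient := by
  refine Infinite.of_injective (fun n => (cycleWord n : (conGen (PGrel SquareBand3)).Quotient))
    fun m n h => ?_
  have h_ker := conGen_PGrel_squareBand3_le_ker ((Con.eq _).mp h)
  rw [Con.ker_rel, lift_cycleWord, lift_cycleWord] at h_ker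
  have h_val : (3 * m + 2 : ℤ) = 3 * n + 2 := congrArg ReesMatrix.val h_ker
  omega
end

section
/- Let S be a regular *-semigroup, and let (p, q) and (r, s) be friendly pairs of projections of S, i.e. p = pqp, q = qpq, r = rsr, s = srs. If pq = rs in S, then p = r and q = s. (Thus every idempotent of S is the product of a unique friendly pair of projections.) -/
/-- In a regular *-semigroup `S`, if `(p, q)` and `(r, s)` are friendly
pairs of projections (`p = pqp`, `q = qpq`, `r = rsr`, `s = srs`) with `pq = rs`, then
`p = r` and `q = s`.  (Every idempotent is the product of a unique friendly pair of
projections.) -/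
theorem stmt19 {S : Type*} [Semigroup S] [StarMul S]
    (hreg : ∀ a : S, a * star a * a = a)
    (p q r s : S)
    (hp : p * p = p ∧ star p = p) (hq : q * q = q ∧ star q = q)
    (hr : r * r = r ∧ star r = r) (hs : s * s = s ∧ star s = s)
    (hpq1 : p = p * q * p) (hpq2 : q = q * p * q)
    (hrs1 : r = r * s * r) (hrs2 : s = s * r * s)
    (heq : p * q = r * s) :
    p = r ∧ q = s := by
  have key : ∀ a b : S, a * a = a → star a = a → b * b = b → star b = b →
      a = a * b * a → b = b * a * b →
      a = (a * b) * star (a * b) ∧ b = star (a * b) * (a * b) := by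
    intro a b haa hsa hbb hsb hab hba
    rw [star_mul, hsa, hsb]
    constructor
    · calc a = a * b * a := hab
        _ = a * (b * b) * a := by rw [hbb]
        _ = a * b * (b * a) := by simp [mul_assoc]
    · calc b = b * a * b := hba
        _ = b * (a * a) * b := by rw [haa]
        _ = b * a * (a * b) := by simp [mul_assoc]
  obtain ⟨k1, k2⟩ := key p q hp.1 hp.2 hq.1 hq.2 hpq1 hpq2
  obtain ⟨k3, k4⟩ := key r s hr.1 hr.2 hs.1 hs.2 hrs1 hrs2
  rw [heq] at k1 k2
  exact ⟨k1.trans k3.symm, k2.trans k4.symm⟩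
end
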